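/- Every weak iterated function system on a compact metric space has at most one attractor: if s_1,…,s_k are weak contractions on a compact metric space X and A, B are nonempty compact sets with A = ⋃_i s_i[A] and B = ⋃_i s_i[B], then A = B. -/

import Mathlib

/-!
Compare two attractors `A ≠ B` through their Hausdorff distance `D > 0`. A weak contraction strictly
shrinks the Hausdorff distance between distinct nonempty compact sets: the largest distance from a
point of `s '' A` to `s '' B` is attained, at some `s a`, and is at most `dist (s a) (s b) < dist a b ≤ D`
for the point `b ∈ B` nearest to `a`. Since the Hausdorff distance of two unions is at most the largest
Hausdorff distance of corresponding pieces, `D = d(⋃ sᵢ '' A, ⋃ sᵢ '' B) < D`.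
-/

open Metric Set

theorem hausdorffEDist_pos_of_ne {E : Type*} [EMetricSpace E] {A B : Set E}
    (hA : IsClosed A) (hB : IsClosed B) (hAB : A ≠ B) :
    0 < hausdorffEDist A B :=
  pos_iff_ne_zero.2 (mt (hA.hausdorffEDist_zero_iff hB).1 hAB)

section

variable {X Y : Type*} [MetricSpace X] [MetricSpace Y]

def IsWeakContraction (f : X → Y) : Prop :=
  ∀ x y, x ≠ y → dist (f x) (f y) < dist x y

namespace IsWeakContraction

variable {f : X → Y}

theorem edist_lt (hf : IsWeakContraction f) {x y : X} (hxy : x ≠ y) :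
    edist (f x) (f y) < edist x y := by
  rw [edist_dist, edist_dist, ENNReal.ofReal_lt_ofReal_iff (dist_pos.2 hxy)]
  exact hf x y hxy

theorem lipschitzWith_one (hf : IsWeakContraction f) : LipschitzWith 1 f :=
  LipschitzWith.mk_one fun x y =>
    (eq_or_ne x y).elim (fun h => by simp [h]) fun h => (hf x y h).le

theorem continuous (hf : IsWeakContraction f) : Continuous f :=
  hf.lipschitzWith_one.continuous

theorem infEDist_image_lt (hf : IsWeakContraction f) {B : Set X} (hBc : IsCompact B)
    (hBne : B.Nonempty) {x : X} {D : ENNReal} (hD : 0 < D) (hxD : infEDist x B ≤ D) :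
    infEDist (f x) (f '' B) < D := by
  obtain ⟨b, hb, hxb⟩ := hBc.exists_infEDist_eq_edist hBne x
  have hle : infEDist (f x) (f '' B) ≤ edist (f x) (f b) :=
    infEDist_le_edist_of_mem (mem_image_of_mem f hb)
  rcases eq_or_ne x b with rfl | hne
  · exact hle.trans_lt (by simpa using hD)
  · calc infEDist (f x) (f '' B) ≤ edist (f x) (f b) := hle
      _ < edist x b := hf.edist_lt hne
      _ = infEDist x B := hxb.symm
      _ ≤ D := hxD

theorem exists_lt_forall_infEDist_image_le (hf : IsWeakContraction f) {A B : Set X}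
    (hAc : IsCompact A) (hBc : IsCompact B) (hAne : A.Nonempty) (hBne : B.Nonempty)
    {D : ENNReal} (hD : 0 < D) (hAB : ∀ a ∈ A, infEDist a B ≤ D) :
    ∃ r < D, ∀ a ∈ A, infEDist (f a) (f '' B) ≤ r := by
  obtain ⟨a₀, ha₀, hmax⟩ := hAc.exists_isMaxOn hAne
    ((continuous_infEDist.comp hf.continuous).continuousOn (s := A))
  exact ⟨_, hf.infEDist_image_lt hBc hBne hD (hAB a₀ ha₀), fun a ha => hmax ha⟩

theorem hausdorffEDist_image_lt (hf : IsWeakContraction f) {A B : Set X}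
    (hAc : IsCompact A) (hBc : IsCompact B) (hAne : A.Nonempty) (hBne : B.Nonempty)
    (hAB : A ≠ B) : hausdorffEDist (f '' A) (f '' B) < hausdorffEDist A B := by
  have hD := hausdorffEDist_pos_of_ne hAc.isClosed hBc.isClosed hAB
  obtain ⟨r₁, hr₁, hA⟩ := hf.exists_lt_forall_infEDist_image_le hAc hBc hAne hBne hD
    fun a ha => infEDist_le_hausdorffEDist_of_mem ha
  obtain ⟨r₂, hr₂, hB⟩ := hf.exists_lt_forall_infEDist_image_le hBc hAc hBne hAne hD
    fun b hb => hausdorffEDist_comm (s := A) ▸ infEDist_le_hausdorffEDist_of_mem hb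
  refine lt_of_le_of_lt (hausdorffEDist_le_of_infEDist (r := max r₁ r₂) ?_ ?_) (max_lt hr₁ hr₂)
  · rintro _ ⟨a, ha, rfl⟩
    exact le_max_of_le_left (hA a ha)
  · rintro _ ⟨b, hb, rfl⟩
    exact le_max_of_le_right (hB b hb)

end IsWeakContraction

end

theorem stmt12_general {X : Type*} [MetricSpace X] (k : ℕ)
    (s : Fin k → X → X)
    (hs : ∀ i, ∀ x y : X, x ≠ y → dist (s i x) (s i y) < dist x y)
    (A B : Set X) (hAne : A.Nonempty) (hBne : B.Nonempty)
    (hAc : IsCompact A) (hBc : IsCompact B)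
    (hA : A = ⋃ i, s i '' A) (hB : B = ⋃ i, s i '' B) : A = B := by
  by_contra hAB
  have hshrink i : hausdorffEDist (s i '' A) (s i '' B) < hausdorffEDist A B :=
    IsWeakContraction.hausdorffEDist_image_lt (hs i) hAc hBc hAne hBne hAB
  have hsup : ⨆ i, hausdorffEDist (s i '' A) (s i '' B) < hausdorffEDist A B := by
    rw [← Finset.sup_univ_eq_iSup,
      Finset.sup_lt_iff (hausdorffEDist_pos_of_ne hAc.isClosed hBc.isClosed hAB)]
    exact fun i _ => hshrink i
  have hunion := hausdorffEDist_iUnion_le (s := fun i => s i '' A) (t := fun i => s i '' B)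
  rw [← hA, ← hB] at hunion
  exact (hunion.trans_lt hsup).false

/-- A weak iterated function system on a compact metric space has at most one
attractor: if `s_1, …, s_k` are weak contractions on a compact metric space `X`
and `A, B` are nonempty compact sets with `A = ⋃ᵢ sᵢ[A]` and `B = ⋃ᵢ sᵢ[B]`,
then `A = B`. -/
theorem stmt12 {X : Type*} [MetricSpace X] [CompactSpace X] (k : ℕ)
    (s : Fin k → X → X)
    (hs : ∀ i, ∀ x y : X, x ≠ y → dist (s i x) (s i y) < dist x y)
    (A B : Set X) (hAne : A.Nonempty) (hBne : B.Nonempty)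
    (hAc : IsCompact A) (hBc : IsCompact B)
    (hA : A = ⋃ i, s i '' A) (hB : B = ⋃ i, s i '' B) : A = B :=
  stmt12_general k s hs A B hAne hBne hAc hBc hA hB
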